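/- arXiv:2001.04457 — 2 statements merged into one kernel-verified Lean document; each statement's English description precedes it below -/
import Mathlib

section
/- For a coherent property map P (one satisfying P ≤ ρ(A, P) for all nonterminals A), and any nonterminals A, B, applying the one-step update ρ preserves coherence: ρ(A, P) is again coherent. -/
/-- Parsing expression grammars over terminals `VT` and nonterminals `Fin (n+1)`. -/
inductive PEG (VT : Type) (n : ℕ) : Type
  | eps : PEG VT n
  | any : PEG VT n
  | term : VT → PEG VT n
  | nt : Fin (n + 1) → PEG VT n
  | seq : PEG VT n → PEG VT n → PEG VT n
  | choice : PEG VT n → PEG VT n → PEG VT n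
  | star : PEG VT n → PEG VT n
  | notP : PEG VT n → PEG VT n

/-- A triple of booleans `(P_⊥, P_0, P_{>0})`: can-fail, can-succeed-without-consuming,
can-succeed-consuming. -/
abbrev Props := Bool × Bool × Bool

/-- A property map records known properties of each nonterminal. -/
abbrev PropMap (n : ℕ) := Fin (n + 1) → Props

/-- Componentwise implication order on property triples. -/
def Props.le (x y : Props) : Prop :=
  (x.1 = true → y.1 = true) ∧ (x.2.1 = true → y.2.1 = true) ∧ (x.2.2 = true → y.2.2 = true)

/-- Componentwise implication order on property maps. -/
def PropMap.le {n : ℕ} (P P' : PropMap n) : Prop := ∀ A, Props.le (P A) (P' A)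

/-- Structural computation of `(P_⊥, P_0, P_{>0})` for a PEG expression from known
properties of nonterminals. -/
def g {VT : Type} {n : ℕ} : PEG VT n → PropMap n → Props
  | .eps, _ => (false, true, false)
  | .any, _ => (true, false, true)
  | .term _, _ => (true, false, true)
  | .nt A, P => P A
  | .seq e1 e2, P =>
      let r1 := g e1 P
      let r2 := g e2 P
      (r1.1 || ((r1.2.1 || r1.2.2) && r2.1),
       r1.2.1 && r2.2.1,
       (r1.2.2 && (r2.2.1 || r2.2.2)) || (r1.2.1 && r2.2.2))
  | .choice e1 e2, P =>
      let r1 := g e1 P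
      let r2 := g e2 P
      (r1.1 && r2.1,
       r1.2.1 || (r1.1 && r2.2.1),
       r1.2.2 || (r1.1 && r2.2.2))
  | .star e, P =>
      let r := g e P
      (false, r.1, r.2.2)
  | .notP e, P =>
      let r := g e P
      (r.2.1 || r.2.2, r.1, false)

/-- One-step update `ρ(A, P)`: recompute the properties of the nonterminal `A`. -/
def rho {VT : Type} {n : ℕ} (Pexp : Fin (n + 1) → PEG VT n) (A : Fin (n + 1))
    (P : PropMap n) : PropMap n :=
  fun B => if B = A then g (Pexp A) P else P B

/-- A property map is coherent when it is not contradicted by a one-step update. -/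
def Coherent {VT : Type} {n : ℕ} (Pexp : Fin (n + 1) → PEG VT n) (P : PropMap n) : Prop :=
  ∀ A, PropMap.le P (rho Pexp A P)

/-- The sweep `r_A^P`: apply `ρ` to every nonterminal from `A` up to `n`. -/
def sweep {VT : Type} {n : ℕ} (Pexp : Fin (n + 1) → PEG VT n) (A : Fin (n + 1))
    (P : PropMap n) : PropMap n :=
  if h : (A : ℕ) < n then sweep Pexp ⟨(A : ℕ) + 1, by omega⟩ (rho Pexp A P)
  else rho Pexp A P
termination_by n - (A : ℕ)
decreasing_by (try simp); omega

/-! Coherence of `P` says exactly that `P B ≤ g (Pexp B) P` for every `B`. The update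
`ρ(A, P)` agrees with `P` or with `g (Pexp A) P` at each nonterminal, so its entry at `B` is still
below `g (Pexp B) P`; and since `g` is monotone and `P ≤ ρ(A, P)`, that is below
`g (Pexp B) (ρ(A, P))`. -/

theorem Props.le_refl (x : Props) : Props.le x x :=
  ⟨id, id, id⟩

theorem Props.le_trans {x y z : Props} (hxy : Props.le x y) (hyz : Props.le y z) :
    Props.le x z :=
  ⟨hyz.1 ∘ hxy.1, hyz.2.1 ∘ hxy.2.1, hyz.2.2 ∘ hxy.2.2⟩

/-- Every clause of `g` is built from `&&` and `||` only, so `g e` is monotone in the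
property map. -/
theorem g_mono {VT : Type} {n : ℕ} (e : PEG VT n) {P Q : PropMap n}
    (h : PropMap.le P Q) : Props.le (g e P) (g e Q) := by
  induction e with
  | eps | any | term _ => exact Props.le_refl _
  | nt A => exact h A
  | seq e₁ e₂ ih₁ ih₂ | choice e₁ e₂ ih₁ ih₂ =>
    simp only [g, Props.le, Bool.or_eq_true, Bool.and_eq_true] at *
    grind
  | star e ih | notP e ih =>
    simp only [g, Props.le, Bool.or_eq_true] at *
    grind

section rho

variable {VT : Type} {n : ℕ} (Pexp : Fin (n + 1) → PEG VT n)

@[simp]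
theorem rho_apply_self (A : Fin (n + 1)) (P : PropMap n) :
    rho Pexp A P A = g (Pexp A) P :=
  if_pos rfl

@[simp]
theorem rho_apply_of_ne {A B : Fin (n + 1)} (hBA : B ≠ A) (P : PropMap n) :
    rho Pexp A P B = P B :=
  if_neg hBA

theorem coherent_iff {P : PropMap n} :
    Coherent Pexp P ↔ ∀ B, Props.le (P B) (g (Pexp B) P) := by
  refine ⟨fun hP B => by simpa using hP B B, fun hP A B => ?_⟩
  by_cases hBA : B = A
  · subst hBA
    simpa using hP B
  · simpa [hBA] using Props.le_refl (P B)

theorem rho_apply_le_g {P : PropMap n} (hP : Coherent Pexp P) (A B : Fin (n + 1)) :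
    Props.le (rho Pexp A P B) (g (Pexp B) P) := by
  by_cases hBA : B = A
  · subst hBA
    simpa using Props.le_refl _
  · simpa [hBA] using (coherent_iff Pexp).1 hP B

end rho

/-- the one-step update `ρ` preserves coherence. -/
theorem rho_preserves_coherent {VT : Type} {n : ℕ} (Pexp : Fin (n + 1) → PEG VT n)
    (P : PropMap n) (hP : Coherent Pexp P) (A : Fin (n + 1)) :
    Coherent Pexp (rho Pexp A P) := by
  rw [coherent_iff]
  intro B
  exact Props.le_trans (rho_apply_le_g Pexp hP A B) (g_mono (Pexp B) (hP A))
end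

section
/- The lexicographic order on 4-tuples (b − s_T, b − s, A, |G|) used as the termination measure of the reference PEG parser is well-founded, and each recursive call of the parser strictly decreases this measure: descending into a subexpression decreases |G|; expanding a nonterminal B < A with the same start decreases A; iterating a star on a well-formed grammar (so the body consumed at least one token) decreases b − s; and expanding a nonterminal B ≥ A after consuming at least one token since s_T (s > s_T, resetting s_T to s) decreases b − s_T. -/
/-- Number of nodes of a PEG expression. -/
def PEG.size {VT : Type} {n : ℕ} : PEG VT n → ℕ
  | .eps => 1
  | .any => 1
  | .term _ => 1
  | .nt _ => 1
  | .seq e1 e2 => e1.size + e2.size + 1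
  | .choice e1 e2 => e1.size + e2.size + 1
  | .star e => e.size + 1
  | .notP e => e.size + 1

/-- Immediate subexpression relation on PEG expressions. -/
inductive Subexpr {VT : Type} {n : ℕ} : PEG VT n → PEG VT n → Prop
  | seq_left (e1 e2 : PEG VT n) : Subexpr e1 (.seq e1 e2)
  | seq_right (e1 e2 : PEG VT n) : Subexpr e2 (.seq e1 e2)
  | choice_left (e1 e2 : PEG VT n) : Subexpr e1 (.choice e1 e2)
  | choice_right (e1 e2 : PEG VT n) : Subexpr e2 (.choice e1 e2)
  | star (e : PEG VT n) : Subexpr e (.star e)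
  | notP (e : PEG VT n) : Subexpr e (.notP e)

/-- Lexicographic order on 4-tuples of naturals. -/
abbrev Lex4 : ℕ × ℕ × ℕ × ℕ → ℕ × ℕ × ℕ × ℕ → Prop :=
  Prod.Lex (· < ·) (Prod.Lex (· < ·) (Prod.Lex (· < ·) (· < ·)))

/-- The termination measure `(b − s_T, b − s, A, |G|)` of the reference parser. -/
def mu {VT : Type} {n : ℕ} (b sT s : ℕ) (A : Fin (n + 1)) (G : PEG VT n) :
    ℕ × ℕ × ℕ × ℕ :=
  (b - sT, b - s, (A : ℕ), G.size)

theorem Subexpr.size_lt {VT : Type} {n : ℕ} {G' G : PEG VT n} (h : Subexpr G' G) :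
    G'.size < G.size := by
  cases h <;> simp only [PEG.size] <;> omega

theorem wellFounded_lex4 : WellFounded Lex4 :=
  wellFounded_lt.prod_lex <| wellFounded_lt.prod_lex <| wellFounded_lt.prod_lex wellFounded_lt

/-- the lexicographic order on the 4-tuples `(b − s_T, b − s, A, |G|)`
is well-founded, and each kind of recursive call of the reference parser strictly
decreases the measure: descending into a subexpression, expanding a smaller
nonterminal, iterating a star after consuming at least one token, and expanding a
nonterminal `B ≥ A` after consuming at least one token since `s_T` (resetting
`s_T` to `s`). -/
theorem measure_wf_and_decreasing {VT : Type} {n : ℕ}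
    (Pexp : Fin (n + 1) → PEG VT n) (b : ℕ) :
    WellFounded (Lex4) ∧
    (∀ (sT s : ℕ) (A : Fin (n + 1)) (G G' : PEG VT n),
        Subexpr G' G → Lex4 (mu b sT s A G') (mu b sT s A G)) ∧
    (∀ (sT s : ℕ) (A B : Fin (n + 1)) (G : PEG VT n),
        B < A → Lex4 (mu b sT s B (Pexp B)) (mu b sT s A G)) ∧
    (∀ (sT s s' : ℕ) (A A' : Fin (n + 1)) (G G' : PEG VT n),
        s < s' → s' ≤ b → Lex4 (mu b sT s' A' G') (mu b sT s A G)) ∧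
    (∀ (sT s : ℕ) (A B : Fin (n + 1)) (G : PEG VT n),
        sT < s → s ≤ b → A ≤ B → Lex4 (mu b s s B (Pexp B)) (mu b sT s A G)) := by
  refine ⟨wellFounded_lex4, ?subexpr, ?smaller_nt, ?star, ?reset⟩
  case subexpr =>
    intro sT s A G G' hG
    exact .right _ <| .right _ <| .right _ hG.size_lt
  case smaller_nt =>
    intro sT s A B G hBA
    exact .right _ <| .right _ <| .left _ _ hBA
  case star =>
    intro sT s s' A A' G G' hs hs'
    exact .right _ <| .left _ _ <| Nat.sub_lt_sub_left (hs.trans_le hs') hs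
  case reset =>
    intro sT s A B G hsT hs _
    exact .left _ _ <| Nat.sub_lt_sub_left (hsT.trans_le hs) hsT
end
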